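/- arXiv:q-alg/9709034 — 3 statements merged into one kernel-verified Lean document; each statement's English description precedes it below -/
import Mathlib

section
/- The bilinear form C(A,B) = Tr([J,A]B) on glbar is antisymmetric: C(A,B) = −C(B,A) for all A, B ∈ glbar. -/
/-- `glbar`: matrices over `ℂ` indexed by `ℤ × ℤ` with only finitely many
nonzero diagonals. -/
def HasFinDiags (A : ℤ → ℤ → ℂ) : Prop :=
  ∃ S : Finset ℤ, ∀ i j : ℤ, j - i ∉ S → A i j = 0

/-- The matrix product `(AB)_{ij} = Σ_{k ∈ ℤ} a_{ik} b_{kj}`. -/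
noncomputable def matMul (A B : ℤ → ℤ → ℂ) : ℤ → ℤ → ℂ :=
  fun i j => ∑ᶠ k : ℤ, A i k * B k j

/-- The commutator `[X,Y] = XY - YX`. -/
noncomputable def matBr (X Y : ℤ → ℤ → ℂ) : ℤ → ℤ → ℂ :=
  matMul X Y - matMul Y X

/-- The diagonal matrix `J` with `J_{ii} = 1` for `i ≤ 0` and `J_{ii} = 0`
for `i > 0`. -/
noncomputable def Jmat : ℤ → ℤ → ℂ :=
  fun i j => if i = j ∧ i ≤ 0 then 1 else 0

/-- The trace: sum of the diagonal entries (a finite sum in the relevant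
cases). -/
noncomputable def matTr (X : ℤ → ℤ → ℂ) : ℂ :=
  ∑ᶠ i : ℤ, X i i

/-- The 2-cocycle `C(A,B) = Tr([J,A]B)`. -/
noncomputable def Ccoc (A B : ℤ → ℤ → ℂ) : ℂ :=
  matTr (matMul (matBr Jmat A) B)

lemma matMul_J_left (A : ℤ → ℤ → ℂ) (i j : ℤ) :
    matMul Jmat A i j = Jmat i i * A i j := by
  unfold matMul
  apply finsum_eq_single
  intro m hm
  have : Jmat i m = 0 := by
    unfold Jmat
    exact if_neg (fun h => hm h.1.symm)
  rw [this, zero_mul]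

lemma matMul_J_right (A : ℤ → ℤ → ℂ) (i j : ℤ) :
    matMul A Jmat i j = A i j * Jmat j j := by
  unfold matMul
  apply finsum_eq_single
  intro m hm
  have : Jmat m j = 0 := by
    unfold Jmat
    exact if_neg (fun h => hm h.1)
  rw [this, mul_zero]

lemma matBr_J (A : ℤ → ℤ → ℂ) (i j : ℤ) :
    matBr Jmat A i j = (Jmat i i - Jmat j j) * A i j := by
  unfold matBr
  have : (matMul Jmat A - matMul A Jmat) i j = matMul Jmat A i j - matMul A Jmat i j := rfl
  rw [this, matMul_J_left, matMul_J_right]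
  ring

lemma Ccoc_eq_sum (A B : ℤ → ℤ → ℂ) (N : ℤ)
    (h : ∀ i k : ℤ, (Jmat i i - Jmat k k) * (A i k * B k i) ≠ 0 →
      i ∈ Finset.Icc (-N) N ∧ k ∈ Finset.Icc (-N) N) :
    Ccoc A B = ∑ i ∈ Finset.Icc (-N) N, ∑ k ∈ Finset.Icc (-N) N,
      (Jmat i i - Jmat k k) * (A i k * B k i) := by
  have hdiag : ∀ i : ℤ, matMul (matBr Jmat A) B i i
      = ∑ᶠ k : ℤ, (Jmat i i - Jmat k k) * (A i k * B k i) := by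
    intro i
    unfold matMul
    congr 1
    funext k
    rw [matBr_J]
    ring
  unfold Ccoc matTr
  rw [show (∑ᶠ i : ℤ, matMul (matBr Jmat A) B i i)
      = ∑ᶠ i : ℤ, ∑ᶠ k : ℤ, (Jmat i i - Jmat k k) * (A i k * B k i) from
    finsum_congr hdiag]
  rw [finsum_eq_finset_sum_of_support_subset]
  · refine Finset.sum_congr rfl fun i _ => ?_
    rw [finsum_eq_finset_sum_of_support_subset]
    intro k hk
    exact (h i k hk).2
  · intro i hi
    have : ∃ k : ℤ, (Jmat i i - Jmat k k) * (A i k * B k i) ≠ 0 := by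
      by_contra hc
      push_neg at hc
      exact hi (finsum_eq_zero_of_forall_eq_zero hc)
    obtain ⟨k, hk⟩ := this
    exact (h i k hk).1

/-- The bilinear form `C(A,B) = Tr([J,A]B)` on `glbar` is antisymmetric:
`C(A,B) = -C(B,A)` for all `A, B ∈ glbar`. -/
theorem Ccoc_antisymm (A B : ℤ → ℤ → ℂ) (hA : HasFinDiags A) (hB : HasFinDiags B) :
    Ccoc A B = -Ccoc B A := by
  obtain ⟨SA, hSA⟩ := hA
  obtain ⟨SB, hSB⟩ := hB
  set N : ℤ := (((SA ∪ SB).sup fun d => d.natAbs : ℕ) : ℤ) with hNdef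
  have habs : ∀ d ∈ SA ∪ SB, |d| ≤ N := by
    intro d hd
    have := Finset.le_sup (f := fun d : ℤ => d.natAbs) hd
    have this' : d.natAbs ≤ (SA ∪ SB).sup (fun d => d.natAbs) := this
    rw [hNdef, Int.abs_eq_natAbs]
    exact_mod_cast this'
  have hkey : ∀ (X Y : ℤ → ℤ → ℂ), (∀ i j : ℤ, j - i ∉ SA ∪ SB → X i j = 0) →
      ∀ i k : ℤ, (Jmat i i - Jmat k k) * (X i k * Y k i) ≠ 0 →
      i ∈ Finset.Icc (-N) N ∧ k ∈ Finset.Icc (-N) N := by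
    intro X Y hX i k h
    have hJ : Jmat i i ≠ Jmat k k := by
      intro e
      apply h
      rw [e]
      ring
    have hXik : X i k ≠ 0 := by
      intro e
      apply h
      rw [e]
      ring
    have hmem : k - i ∈ SA ∪ SB := by
      by_contra hc
      exact hXik (hX i k hc)
    have hd := habs _ hmem
    rw [abs_le] at hd
    have hcase : (i ≤ 0 ∧ 0 < k) ∨ (k ≤ 0 ∧ 0 < i) := by
      by_contra hc
      push_neg at hc
      apply hJ
      unfold Jmat
      rcases le_or_gt i 0 with hi | hi
      · have hk : k ≤ 0 := hc.1 hi
        simp [hi, hk]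
      · have hk : 0 < k := by
          by_contra hk
          exact absurd hi (not_lt.mpr (hc.2 (not_lt.mp hk)))
        simp [not_le.mpr hi, not_le.mpr hk]
    simp only [Finset.mem_Icc]
    omega
  have hXA : ∀ i j : ℤ, j - i ∉ SA ∪ SB → A i j = 0 := fun i j hj =>
    hSA i j (fun hs => hj (Finset.mem_union_left _ hs))
  have hXB : ∀ i j : ℤ, j - i ∉ SA ∪ SB → B i j = 0 := fun i j hj =>
    hSB i j (fun hs => hj (Finset.mem_union_right _ hs))
  rw [Ccoc_eq_sum A B N (hkey A B hXA), Ccoc_eq_sum B A N (hkey B A hXB)]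
  rw [Finset.sum_comm, ← Finset.sum_neg_distrib]
  refine Finset.sum_congr rfl fun k _ => ?_
  rw [← Finset.sum_neg_distrib]
  refine Finset.sum_congr rfl fun i _ => ?_
  ring
end

section
/- The vector space 𝒟 ⊕ ℂ·K equipped with the bracket [(u,a),(v,b)] = ([u,v]_𝒟, Ψ(u,v)) is a Lie algebra over ℂ: the bracket is bilinear and alternating, and satisfies the Jacobi identity; in particular Ψ is an antisymmetric 2-cocycle on the Lie algebra (𝒟, [·,·]_𝒟). -/
open Polynomial

/-- `𝒟 = ⊕_{k∈ℤ} ℂ[x]`: the element with `f` in component `k` (and `0`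
elsewhere) is written `tᵏ f(D)`, i.e. `Finsupp.single k f`. -/
abbrev Dcal : Type := ℤ →₀ Polynomial ℂ

/-- The bracket on `𝒟`, the bilinear extension of
`[tʳ f(D), tˢ g(D)] = t^{r+s}( f(x+s)g(x) - f(x)g(x+r) )`. -/
noncomputable def Dbr (u v : Dcal) : Dcal :=
  u.sum fun r f => v.sum fun s g =>
    Finsupp.single (r + s) (f.comp (X + C (s : ℂ)) * g - f * g.comp (X + C (r : ℂ)))

/-- The 2-cocycle `Ψ` on `𝒟`, the bilinear extension of:
`Ψ(tʳ f(D), tˢ g(D)) = 0` if `r + s ≠ 0`;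
`Ψ(tʳ f(D), t⁻ʳ g(D)) = Σ_{j=1}^{r} f(-j) g(r-j)` for `r ≥ 0`; and
`Ψ(tʳ f(D), t⁻ʳ g(D)) = -Σ_{j=1}^{-r} g(-j) f(-r-j)` for `r < 0`. -/
noncomputable def Psi (u v : Dcal) : ℂ :=
  u.sum fun r f => v.sum fun s g =>
    if r + s = 0 then
      (if 0 ≤ r then
        ∑ j ∈ Finset.range r.toNat, f.eval (-((j : ℂ) + 1)) * g.eval ((r : ℂ) - ((j : ℂ) + 1))
      else
        -∑ j ∈ Finset.range (-r).toNat, g.eval (-((j : ℂ) + 1)) * f.eval ((-r : ℂ) - ((j : ℂ) + 1)))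
    else 0

/-- The bracket `[(u,a),(v,b)] = ([u,v]_𝒟, Ψ(u,v))` on `𝒟̂ = 𝒟 ⊕ ℂ·K`. -/
noncomputable def DhatBr (P Q : Dcal × ℂ) : Dcal × ℂ :=
  (Dbr P.1 Q.1, Psi P.1 Q.1)

/-! ### Bilinearity of `Dbr` -/

lemma Dbr_zero_left (v : Dcal) : Dbr 0 v = 0 := by simp [Dbr]

lemma Dbr_zero_right (u : Dcal) : Dbr u 0 = 0 := by simp [Dbr]

lemma Dbr_add_left (u u' v : Dcal) : Dbr (u + u') v = Dbr u v + Dbr u' v := by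
  unfold Dbr
  apply Finsupp.sum_add_index' <;> intro r
  · simp
  · intro f f'
    rw [← Finsupp.sum_add]
    apply Finsupp.sum_congr
    intro s _
    rw [← Finsupp.single_add]
    congr 1
    rw [add_comp]
    ring

lemma Dbr_add_right (u v v' : Dcal) : Dbr u (v + v') = Dbr u v + Dbr u v' := by
  unfold Dbr
  rw [← Finsupp.sum_add]
  apply Finsupp.sum_congr
  intro r _
  apply Finsupp.sum_add_index' <;> intro s
  · simp
  · intro g g'
    rw [← Finsupp.single_add]
    congr 1
    rw [add_comp]
    ring

lemma Dbr_smul_left (c : ℂ) (u v : Dcal) : Dbr (c • u) v = c • Dbr u v := by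
  unfold Dbr
  rw [Finsupp.sum_smul_index', Finsupp.smul_sum]
  · apply Finsupp.sum_congr
    intro r _
    rw [Finsupp.smul_sum]
    apply Finsupp.sum_congr
    intro s _
    rw [Finsupp.smul_single]
    congr 1
    rw [smul_comp]
    simp [smul_sub, smul_mul_assoc]
  · intro r; simp

lemma Dbr_smul_right (c : ℂ) (u v : Dcal) : Dbr u (c • v) = c • Dbr u v := by
  unfold Dbr
  rw [Finsupp.smul_sum]
  apply Finsupp.sum_congr
  intro r _
  rw [Finsupp.sum_smul_index', Finsupp.smul_sum]
  · apply Finsupp.sum_congr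
    intro s _
    rw [Finsupp.smul_single]
    congr 1
    rw [smul_comp]
    simp [smul_sub, mul_smul_comm, smul_mul_assoc]
  · intro s; simp

/-! ### Bilinearity of `Psi` -/

lemma Psi_zero_left (v : Dcal) : Psi 0 v = 0 := by simp [Psi]

lemma Psi_zero_right (u : Dcal) : Psi u 0 = 0 := by simp [Psi]

lemma Psi_add_left (u u' v : Dcal) : Psi (u + u') v = Psi u v + Psi u' v := by
  unfold Psi
  apply Finsupp.sum_add_index' <;> intro r
  · simp
  · intro f f'
    rw [← Finsupp.sum_add]
    apply Finsupp.sum_congr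
    intro s _
    split_ifs
    · simp only [Polynomial.eval_add, add_mul, Finset.sum_add_distrib]
    · simp only [Polynomial.eval_add, mul_add, Finset.sum_add_distrib, neg_add]
    · simp

lemma Psi_add_right (u v v' : Dcal) : Psi u (v + v') = Psi u v + Psi u v' := by
  unfold Psi
  rw [← Finsupp.sum_add]
  apply Finsupp.sum_congr
  intro r _
  apply Finsupp.sum_add_index' <;> intro s
  · split_ifs <;> simp
  · intro g g'
    split_ifs
    · simp only [Polynomial.eval_add, mul_add, Finset.sum_add_distrib]
    · simp only [Polynomial.eval_add, add_mul, Finset.sum_add_distrib, neg_add]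
    · simp

lemma Psi_smul_left (c : ℂ) (u v : Dcal) : Psi (c • u) v = c • Psi u v := by
  unfold Psi
  rw [Finsupp.sum_smul_index', Finsupp.smul_sum]
  · apply Finsupp.sum_congr
    intro r _
    rw [Finsupp.smul_sum]
    apply Finsupp.sum_congr
    intro s _
    split_ifs
    · simp only [Polynomial.eval_smul, smul_eq_mul, Finset.mul_sum]
      exact Finset.sum_congr rfl fun i _ => by ring
    · simp only [Polynomial.eval_smul, smul_eq_mul, Finset.mul_sum, mul_neg, neg_inj]
      exact Finset.sum_congr rfl fun i _ => by ring
    · simp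
  · intro r
    apply Finset.sum_eq_zero
    intro s _
    split_ifs <;> simp

lemma Psi_smul_right (c : ℂ) (u v : Dcal) : Psi u (c • v) = c • Psi u v := by
  unfold Psi
  rw [Finsupp.smul_sum]
  apply Finsupp.sum_congr
  intro r _
  rw [Finsupp.sum_smul_index', Finsupp.smul_sum]
  · apply Finsupp.sum_congr
    intro s _
    split_ifs
    · simp only [Polynomial.eval_smul, smul_eq_mul, Finset.mul_sum]
      exact Finset.sum_congr rfl fun i _ => by ring
    · simp only [Polynomial.eval_smul, smul_eq_mul, Finset.mul_sum, mul_neg, neg_inj]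
      exact Finset.sum_congr rfl fun i _ => by ring
    · simp
  · intro s
    split_ifs <;> simp

/-! ### Values on singles -/

lemma Dbr_single (r s : ℤ) (f g : Polynomial ℂ) :
    Dbr (Finsupp.single r f) (Finsupp.single s g) =
      Finsupp.single (r + s) (f.comp (X + C (s : ℂ)) * g - f * g.comp (X + C (r : ℂ))) := by
  unfold Dbr
  rw [Finsupp.sum_single_index, Finsupp.sum_single_index] <;> simp

noncomputable def phi (a : ℤ) (p q : Polynomial ℂ) : ℂ :=
  if 0 ≤ a then
    ∑ j ∈ Finset.range a.toNat, p.eval (-((j : ℂ) + 1)) * q.eval ((a : ℂ) - ((j : ℂ) + 1))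
  else
    -∑ j ∈ Finset.range (-a).toNat, q.eval (-((j : ℂ) + 1)) * p.eval ((-a : ℂ) - ((j : ℂ) + 1))

lemma Psi_single (r s : ℤ) (f g : Polynomial ℂ) :
    Psi (Finsupp.single r f) (Finsupp.single s g) =
      if r + s = 0 then phi r f g else 0 := by
  unfold Psi phi
  rw [Finsupp.sum_single_index, Finsupp.sum_single_index]
  · split_ifs <;> simp
  · apply Finset.sum_eq_zero
    intro s _
    split_ifs <;> simp

/-! ### Antisymmetry -/

lemma Psi_single_skew (r s : ℤ) (f g : Polynomial ℂ) :
    Psi (Finsupp.single r f) (Finsupp.single s g)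
      + Psi (Finsupp.single s g) (Finsupp.single r f) = 0 := by
  rw [Psi_single, Psi_single]
  by_cases h : r + s = 0
  · obtain rfl : s = -r := by omega
    rw [if_pos h, if_pos (by omega)]
    unfold phi
    rcases lt_trichotomy r 0 with hr | hr | hr
    · rw [if_neg (by omega), if_pos (by omega)]
      simp only [Int.cast_neg, neg_neg]
      exact neg_add_cancel _
    · subst hr; simp
    · rw [if_pos (by omega), if_neg (by omega)]
      simp only [Int.cast_neg, neg_neg]
      exact add_neg_cancel _
  · rw [if_neg h, if_neg (by omega)]; simp

lemma Psi_skew (u v : Dcal) : Psi u v + Psi v u = 0 := by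
  induction u using Finsupp.induction_linear with
  | zero => simp [Psi_zero_left, Psi_zero_right]
  | add a b ha hb =>
    rw [Psi_add_left, Psi_add_right]
    linear_combination ha + hb
  | single r f =>
    induction v using Finsupp.induction_linear with
    | zero => simp [Psi_zero_left, Psi_zero_right]
    | add a b ha hb =>
      rw [Psi_add_left, Psi_add_right]
      linear_combination ha + hb
    | single s g => exact Psi_single_skew r s f g

lemma Dbr_single_skew (r s : ℤ) (f g : Polynomial ℂ) :
    Dbr (Finsupp.single r f) (Finsupp.single s g)
      + Dbr (Finsupp.single s g) (Finsupp.single r f) = 0 := by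
  rw [Dbr_single, Dbr_single, add_comm s r, ← Finsupp.single_add]
  rw [show f.comp (X + C (s:ℂ)) * g - f * g.comp (X + C (r:ℂ)) + (g.comp (X + C (r:ℂ)) * f - g * f.comp (X + C (s:ℂ))) = 0 by ring,
    Finsupp.single_zero]

lemma Dbr_skew (u v : Dcal) : Dbr u v + Dbr v u = 0 := by
  induction u using Finsupp.induction_linear with
  | zero => simp [Dbr_zero_left, Dbr_zero_right]
  | add a b ha hb =>
    rw [Dbr_add_left, Dbr_add_right, add_add_add_comm, ha, hb, add_zero]
  | single r f =>
    induction v using Finsupp.induction_linear with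
    | zero => simp [Dbr_zero_left, Dbr_zero_right]
    | add a b ha hb =>
      rw [Dbr_add_left, Dbr_add_right, add_add_add_comm, ha, hb, add_zero]
    | single s g => exact Dbr_single_skew r s f g

/-! ### Jacobi identity for `Dbr` -/

private lemma shiftc (a b : ℂ) : (X + C a + C b : Polynomial ℂ) = X + C b + C a := by ring

lemma jacobi_poly (r s t : ℤ) (f g h : Polynomial ℂ) :
    ((f.comp (X + C (s:ℂ)) * g - f * g.comp (X + C (r:ℂ))).comp (X + C (t:ℂ)) * h
      - (f.comp (X + C (s:ℂ)) * g - f * g.comp (X + C (r:ℂ))) * h.comp (X + C ((r+s : ℤ):ℂ)))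
    + ((g.comp (X + C (t:ℂ)) * h - g * h.comp (X + C (s:ℂ))).comp (X + C (r:ℂ)) * f
      - (g.comp (X + C (t:ℂ)) * h - g * h.comp (X + C (s:ℂ))) * f.comp (X + C ((s+t : ℤ):ℂ)))
    + ((h.comp (X + C (r:ℂ)) * f - h * f.comp (X + C (t:ℂ))).comp (X + C (s:ℂ)) * g
      - (h.comp (X + C (r:ℂ)) * f - h * f.comp (X + C (t:ℂ))) * g.comp (X + C ((t+r : ℤ):ℂ))) = 0 := by
  simp only [sub_comp, mul_comp, Polynomial.comp_assoc, add_comp, X_comp, C_comp, Int.cast_add,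
    C_add, ← add_assoc]
  rw [shiftc (t:ℂ) (s:ℂ), shiftc (t:ℂ) (r:ℂ), shiftc (s:ℂ) (r:ℂ)]
  ring

lemma Dbr_single_jacobi (r s t : ℤ) (f g h : Polynomial ℂ) :
    Dbr (Dbr (Finsupp.single r f) (Finsupp.single s g)) (Finsupp.single t h)
      + Dbr (Dbr (Finsupp.single s g) (Finsupp.single t h)) (Finsupp.single r f)
      + Dbr (Dbr (Finsupp.single t h) (Finsupp.single r f)) (Finsupp.single s g) = 0 := by
  rw [Dbr_single, Dbr_single, Dbr_single, Dbr_single, Dbr_single, Dbr_single,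
    show s + t + r = r + s + t from by ring, show t + r + s = r + s + t from by ring,
    ← Finsupp.single_add, ← Finsupp.single_add, jacobi_poly, Finsupp.single_zero]

private lemma add_shuffle {M : Type*} [AddCommMonoid M] (a1 a2 a3 b1 b2 b3 : M)
    (h1 : a1 + a2 + a3 = 0) (h2 : b1 + b2 + b3 = 0) :
    (a1 + b1) + (a2 + b2) + (a3 + b3) = 0 := by
  have : (a1 + b1) + (a2 + b2) + (a3 + b3) = (a1 + a2 + a3) + (b1 + b2 + b3) := by
    abel
  rw [this, h1, h2, add_zero]

lemma Dbr_jacobi (u v w : Dcal) :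
    Dbr (Dbr u v) w + Dbr (Dbr v w) u + Dbr (Dbr w u) v = 0 := by
  induction u using Finsupp.induction_linear with
  | zero => simp [Dbr_zero_left, Dbr_zero_right]
  | add a b ha hb =>
    simp only [Dbr_add_left, Dbr_add_right]
    exact add_shuffle _ _ _ _ _ _ ha hb
  | single r f =>
    induction v using Finsupp.induction_linear with
    | zero => simp [Dbr_zero_left, Dbr_zero_right]
    | add a b ha hb =>
      simp only [Dbr_add_left, Dbr_add_right]
      exact add_shuffle _ _ _ _ _ _ ha hb
    | single s g =>
      induction w using Finsupp.induction_linear with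
      | zero => simp [Dbr_zero_left, Dbr_zero_right]
      | add a b ha hb =>
        simp only [Dbr_add_left, Dbr_add_right]
        exact add_shuffle _ _ _ _ _ _ ha hb
      | single t h => exact Dbr_single_jacobi r s t f g h

/-! ### The cocycle identity for `Psi` -/

noncomputable def eps (m : ℤ) : ℂ := if 0 ≤ m then 1 else 0

lemma eps_eq' {a b : ℤ} (h : (0 ≤ a ∧ 0 ≤ b) ∨ (a < 0 ∧ b < 0)) : eps a - eps b = 0 := by
  unfold eps
  rcases h with ⟨h1, h2⟩ | ⟨h1, h2⟩
  · rw [if_pos h1, if_pos h2, sub_self]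
  · rw [if_neg (by omega), if_neg (by omega), sub_self]

lemma sum_shift (G : ℤ → ℂ) (K M c : ℤ) (hG : ∀ m, m ∉ Finset.Icc (-K) K → G m = 0)
    (h1 : -M ≤ -K - c) (h2 : K - c ≤ M) (h3 : -M ≤ -K) (h4 : K ≤ M) :
    ∑ m ∈ Finset.Icc (-M) M, G (m + c) = ∑ m ∈ Finset.Icc (-M) M, G m := by
  have A : ∑ m ∈ Finset.Icc (-M) M, G (m + c) = ∑ m ∈ Finset.Icc (-K - c) (K - c), G (m + c) := by
    refine (Finset.sum_subset (Finset.Icc_subset_Icc h1 h2) ?_).symm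
    intro m hm hnm
    apply hG
    simp only [Finset.mem_Icc] at *
    omega
  have B : ∑ m ∈ Finset.Icc (-K - c) (K - c), G (m + c) = ∑ n ∈ Finset.Icc (-K) K, G n := by
    refine Finset.sum_nbij' (i := fun m => m + c) (j := fun n => n - c) ?_ ?_ ?_ ?_ ?_ <;>
      intro x hx <;>
      simp only [Finset.mem_Icc] at hx ⊢ <;> (try dsimp only) <;>
      first
        | omega
        | (simp only [Finset.mem_Icc]; omega)
        | rfl
  have Cc : ∑ m ∈ Finset.Icc (-M) M, G m = ∑ n ∈ Finset.Icc (-K) K, G n := by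
    refine (Finset.sum_subset (Finset.Icc_subset_Icc h3 h4) ?_).symm
    intro m hm hnm; exact hG m hnm
  rw [A, B, Cc]

lemma phi_eq_sum (a M : ℤ) (hM : (a.natAbs : ℤ) ≤ M) (p q : Polynomial ℂ) :
    phi a p q = ∑ m ∈ Finset.Icc (-M) M,
      (eps (m + a) - eps m) * p.eval (m : ℂ) * q.eval ((m : ℂ) + (a : ℂ)) := by
  rcases le_or_gt 0 a with ha | ha
  · rw [phi, if_pos ha,
      ← Finset.sum_subset (Finset.Icc_subset_Icc (by omega) (by omega) :
        Finset.Icc (-a) (-1) ⊆ Finset.Icc (-M) M)]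
    · refine Finset.sum_nbij' (i := fun (j : ℕ) => -(j : ℤ) - 1) (j := fun m => (-m - 1).toNat)
        ?mem1 ?mem2 ?inv1 ?inv2 ?val
      case mem1 => intro j hj; simp only [Finset.mem_range] at hj; simp only [Finset.mem_Icc]; omega
      case mem2 => intro m hm; simp only [Finset.mem_Icc] at hm; simp only [Finset.mem_range]; omega
      case inv1 => intro j hj; simp only [Finset.mem_range] at hj; omega
      case inv2 => intro m hm; simp only [Finset.mem_Icc] at hm; omega
      case val =>
        intro j hj
        simp only [Finset.mem_range] at hj
        have e1 : eps (-(j : ℤ) - 1 + a) - eps (-(j : ℤ) - 1) = 1 := by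
          unfold eps; rw [if_pos (by omega), if_neg (by omega)]; ring
        have e2 : ((-(j : ℤ) - 1 : ℤ) : ℂ) = -((j : ℂ) + 1) := by push_cast; ring
        have e3 : ((-(j : ℤ) - 1 : ℤ) : ℂ) + (a : ℂ) = (a : ℂ) - ((j : ℂ) + 1) := by push_cast; ring
        rw [e1, one_mul, e3, e2]
    · intro m hm hnm
      simp only [Finset.mem_Icc] at hm hnm
      rw [eps_eq' (by omega), zero_mul, zero_mul]
  · rw [phi, if_neg (by omega),
      ← Finset.sum_subset (Finset.Icc_subset_Icc (by omega) (by omega) :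
        Finset.Icc 0 (-a - 1) ⊆ Finset.Icc (-M) M)]
    · rw [neg_eq_iff_eq_neg, ← Finset.sum_neg_distrib]
      refine Finset.sum_nbij' (i := fun (j : ℕ) => -a - (j : ℤ) - 1) (j := fun m => (-a - m - 1).toNat)
        ?mem1 ?mem2 ?inv1 ?inv2 ?val
      case mem1 => intro j hj; simp only [Finset.mem_range] at hj; simp only [Finset.mem_Icc]; omega
      case mem2 => intro m hm; simp only [Finset.mem_Icc] at hm; simp only [Finset.mem_range]; omega
      case inv1 => intro j hj; simp only [Finset.mem_range] at hj; omega
      case inv2 => intro m hm; simp only [Finset.mem_Icc] at hm; omega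
      case val =>
        intro j hj
        simp only [Finset.mem_range] at hj
        have e1 : eps (-a - (j : ℤ) - 1 + a) - eps (-a - (j : ℤ) - 1) = -1 := by
          unfold eps; rw [if_neg (by omega), if_pos (by omega)]; ring
        have e2 : ((-a - (j : ℤ) - 1 : ℤ) : ℂ) = (-a : ℂ) - ((j : ℂ) + 1) := by push_cast; ring
        have e3 : ((-a - (j : ℤ) - 1 : ℤ) : ℂ) + (a : ℂ) = -((j : ℂ) + 1) := by push_cast; ring
        rw [e1, e3, e2]
        ring
    · intro m hm hnm
      simp only [Finset.mem_Icc] at hm hnm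
      rw [eps_eq' (by omega), zero_mul, zero_mul]

lemma key (r s M : ℤ) (hM : 2 * ((r.natAbs : ℤ) + (s.natAbs : ℤ)) ≤ M) (F G H : ℤ → ℂ) :
    (∑ m ∈ Finset.Icc (-M) M,
        (eps (m+r+s) - eps m) * (F (m+s) * G m - F m * G (m+r)) * H (m+r+s))
  + (∑ m ∈ Finset.Icc (-M) M,
        (eps (m-r) - eps m) * (G (m-r-s) * H m - G m * H (m+s)) * F (m-r))
  + (∑ m ∈ Finset.Icc (-M) M,
        (eps (m-s) - eps m) * (H (m+r) * F m - H m * F (m-r-s)) * G (m-s)) = 0 := by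
  set K : ℤ := (r.natAbs : ℤ) + (s.natAbs : ℤ) with hK
  have e2a : (∑ m ∈ Finset.Icc (-M) M, (eps (m-r) - eps m) * (G (m-r-s) * H m * F (m-r)))
      = ∑ m ∈ Finset.Icc (-M) M, (eps (m+s) - eps (m+r+s)) * (F (m+s) * G m * H (m+r+s)) := by
    refine ((sum_shift (fun m => (eps (m-r) - eps m) * (G (m-r-s) * H m * F (m-r)))
      K M (r+s) ?_ (by omega) (by omega) (by omega) (by omega)).symm).trans ?_
    · intro m hm
      simp only [Finset.mem_Icc, not_and, not_le] at hm
      rw [eps_eq' (by omega), zero_mul]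
    · refine Finset.sum_congr rfl fun m _ => ?_
      rw [show m + (r+s) - r - s = m by ring, show m + (r+s) - r = m + s by ring,
        show m + (r+s) = m + r + s by ring]
      ring
  have e2b : (∑ m ∈ Finset.Icc (-M) M, (eps (m-r) - eps m) * (G m * H (m+s) * F (m-r)))
      = ∑ m ∈ Finset.Icc (-M) M, (eps m - eps (m+r)) * (F m * G (m+r) * H (m+r+s)) := by
    refine ((sum_shift (fun m => (eps (m-r) - eps m) * (G m * H (m+s) * F (m-r)))
      K M r ?_ (by omega) (by omega) (by omega) (by omega)).symm).trans ?_
    · intro m hm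
      simp only [Finset.mem_Icc, not_and, not_le] at hm
      rw [eps_eq' (by omega), zero_mul]
    · refine Finset.sum_congr rfl fun m _ => ?_
      rw [show m + r - r = m by ring]
      ring
  have e3a : (∑ m ∈ Finset.Icc (-M) M, (eps (m-s) - eps m) * (H (m+r) * F m * G (m-s)))
      = ∑ m ∈ Finset.Icc (-M) M, (eps m - eps (m+s)) * (F (m+s) * G m * H (m+r+s)) := by
    refine ((sum_shift (fun m => (eps (m-s) - eps m) * (H (m+r) * F m * G (m-s)))
      K M s ?_ (by omega) (by omega) (by omega) (by omega)).symm).trans ?_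
    · intro m hm
      simp only [Finset.mem_Icc, not_and, not_le] at hm
      rw [eps_eq' (by omega), zero_mul]
    · refine Finset.sum_congr rfl fun m _ => ?_
      rw [show m + s - s = m by ring, show m + s + r = m + r + s by ring]
      ring
  have e3b : (∑ m ∈ Finset.Icc (-M) M, (eps (m-s) - eps m) * (H m * F (m-r-s) * G (m-s)))
      = ∑ m ∈ Finset.Icc (-M) M, (eps (m+r) - eps (m+r+s)) * (F m * G (m+r) * H (m+r+s)) := by
    refine ((sum_shift (fun m => (eps (m-s) - eps m) * (H m * F (m-r-s) * G (m-s)))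
      K M (r+s) ?_ (by omega) (by omega) (by omega) (by omega)).symm).trans ?_
    · intro m hm
      simp only [Finset.mem_Icc, not_and, not_le] at hm
      rw [eps_eq' (by omega), zero_mul]
    · refine Finset.sum_congr rfl fun m _ => ?_
      rw [show m + (r+s) - r - s = m by ring, show m + (r+s) - s = m + r by ring,
        show m + (r+s) = m + r + s by ring]
      ring
  have E2 : (∑ m ∈ Finset.Icc (-M) M,
        (eps (m-r) - eps m) * (G (m-r-s) * H m - G m * H (m+s)) * F (m-r))
      = ∑ m ∈ Finset.Icc (-M) M,
        ((eps (m+s) - eps (m+r+s)) * (F (m+s) * G m * H (m+r+s))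
          - (eps m - eps (m+r)) * (F m * G (m+r) * H (m+r+s))) := by
    rw [Finset.sum_sub_distrib, ← e2a, ← e2b, ← Finset.sum_sub_distrib]
    exact Finset.sum_congr rfl fun m _ => by ring
  have E3 : (∑ m ∈ Finset.Icc (-M) M,
        (eps (m-s) - eps m) * (H (m+r) * F m - H m * F (m-r-s)) * G (m-s))
      = ∑ m ∈ Finset.Icc (-M) M,
        ((eps m - eps (m+s)) * (F (m+s) * G m * H (m+r+s))
          - (eps (m+r) - eps (m+r+s)) * (F m * G (m+r) * H (m+r+s))) := by
    rw [Finset.sum_sub_distrib, ← e3a, ← e3b, ← Finset.sum_sub_distrib]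
    exact Finset.sum_congr rfl fun m _ => by ring
  rw [E2, E3, ← Finset.sum_add_distrib, ← Finset.sum_add_distrib]
  apply Finset.sum_eq_zero
  intro m _
  ring

lemma Psi_single_cocycle (r s t : ℤ) (f g h : Polynomial ℂ) :
    Psi (Dbr (Finsupp.single r f) (Finsupp.single s g)) (Finsupp.single t h)
      + Psi (Dbr (Finsupp.single s g) (Finsupp.single t h)) (Finsupp.single r f)
      + Psi (Dbr (Finsupp.single t h) (Finsupp.single r f)) (Finsupp.single s g) = 0 := by
  rw [Dbr_single, Dbr_single, Dbr_single, Psi_single, Psi_single, Psi_single]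
  by_cases hc : r + s + t = 0
  · obtain rfl : t = -r - s := by omega
    rw [if_pos (by omega), if_pos (by omega), if_pos (by omega)]
    set M : ℤ := 2 * ((r.natAbs : ℤ) + (s.natAbs : ℤ)) with hMdef
    rw [phi_eq_sum _ M (by omega), phi_eq_sum _ M (by omega), phi_eq_sum _ M (by omega)]
    refine Eq.trans ?_ (key r s M (by omega)
      (fun n => f.eval (n : ℂ)) (fun n => g.eval (n : ℂ)) (fun n => h.eval (n : ℂ)))
    congr 1
    · congr 1
      · -- term 1
        refine Finset.sum_congr rfl fun m _ => ?_
        simp only [eval_mul, eval_sub, eval_comp, eval_add, eval_X, eval_C]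
        rw [show m + (r + s) = m + r + s from by ring]
        push_cast [← add_assoc, ← sub_eq_add_neg]
        ring
      · -- term 2
        refine Finset.sum_congr rfl fun m _ => ?_
        rw [show s + (-r - s) = -r from by ring]
        simp only [eval_mul, eval_sub, eval_comp, eval_add, eval_X, eval_C]
        rw [show m + -r = m - r from by ring]
        push_cast [← add_assoc, ← sub_eq_add_neg]
        ring
    · -- term 3
      refine Finset.sum_congr rfl fun m _ => ?_
      rw [show -r - s + r = -s from by ring]
      simp only [eval_mul, eval_sub, eval_comp, eval_add, eval_X, eval_C]
      rw [show m + -s = m - s from by ring]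
      push_cast [← add_assoc, ← sub_eq_add_neg]
      ring
  · rw [if_neg (by omega), if_neg (by omega), if_neg (by omega)]; simp

lemma Psi_cocycle (u v w : Dcal) :
    Psi (Dbr u v) w + Psi (Dbr v w) u + Psi (Dbr w u) v = 0 := by
  induction u using Finsupp.induction_linear with
  | zero => simp [Dbr_zero_left, Dbr_zero_right, Psi_zero_left, Psi_zero_right]
  | add a b ha hb =>
    simp only [Dbr_add_left, Dbr_add_right, Psi_add_left, Psi_add_right]
    exact add_shuffle _ _ _ _ _ _ ha hb
  | single r f =>
    induction v using Finsupp.induction_linear with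
    | zero => simp [Dbr_zero_left, Dbr_zero_right, Psi_zero_left, Psi_zero_right]
    | add a b ha hb =>
      simp only [Dbr_add_left, Dbr_add_right, Psi_add_left, Psi_add_right]
      exact add_shuffle _ _ _ _ _ _ ha hb
    | single s g =>
      induction w using Finsupp.induction_linear with
      | zero => simp [Dbr_zero_left, Dbr_zero_right, Psi_zero_left, Psi_zero_right]
      | add a b ha hb =>
        simp only [Dbr_add_left, Dbr_add_right, Psi_add_left, Psi_add_right]
        exact add_shuffle _ _ _ _ _ _ ha hb
      | single t h => exact Psi_single_cocycle r s t f g h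

lemma Dbr_self (u : Dcal) : Dbr u u = 0 := by
  have h2 : (2 : ℂ) • Dbr u u = 0 := by
    rw [two_smul]; exact Dbr_skew u u
  simpa using h2

lemma Psi_self (u : Dcal) : Psi u u = 0 := by
  linear_combination (Psi_skew u u) / 2

/-- `𝒟 ⊕ ℂ·K` with the bracket `[(u,a),(v,b)] = ([u,v]_𝒟, Ψ(u,v))` is a Lie
algebra over `ℂ`: the bracket is bilinear and alternating and satisfies the
Jacobi identity; in particular `Ψ` is an antisymmetric 2-cocycle on the Lie
algebra `(𝒟, [·,·]_𝒟)`. -/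
theorem Dhat_is_LieAlgebra :
    (∀ P Q R : Dcal × ℂ,
      DhatBr (P + Q) R = DhatBr P R + DhatBr Q R ∧
      DhatBr P (Q + R) = DhatBr P Q + DhatBr P R) ∧
    (∀ (c : ℂ) (P Q : Dcal × ℂ),
      DhatBr (c • P) Q = c • DhatBr P Q ∧ DhatBr P (c • Q) = c • DhatBr P Q) ∧
    (∀ P : Dcal × ℂ, DhatBr P P = 0) ∧
    (∀ P Q R : Dcal × ℂ,
      DhatBr (DhatBr P Q) R + DhatBr (DhatBr Q R) P + DhatBr (DhatBr R P) Q = 0) ∧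
    (∀ u v : Dcal, Psi u v = -Psi v u) ∧
    (∀ u v w : Dcal, Psi (Dbr u v) w + Psi (Dbr v w) u + Psi (Dbr w u) v = 0) := by
  refine ⟨?_, ?_, ?_, ?_, ?_, Psi_cocycle⟩
  · intro P Q R
    constructor <;>
      simp only [DhatBr, Prod.fst_add, Dbr_add_left, Dbr_add_right, Psi_add_left,
        Psi_add_right, Prod.mk_add_mk]
  · intro c P Q
    constructor <;>
      simp only [DhatBr, Prod.smul_fst, Dbr_smul_left, Dbr_smul_right, Psi_smul_left,
        Psi_smul_right, Prod.smul_mk]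
  · intro P
    simp only [DhatBr, Dbr_self, Psi_self]
    rfl
  · intro P Q R
    simp only [DhatBr, Prod.mk_add_mk, Prod.mk_eq_zero]
    exact ⟨Dbr_jacobi _ _ _, Psi_cocycle _ _ _⟩
  · intro u v
    linear_combination Psi_skew u v
end

section
/- Let N ≥ 1, let λ₁ ≥ λ₂ ≥ ⋯ ≥ λ_N be integers, and let p ∈ {0, 1, …, N} satisfy λ_a ≥ 0 for all a ≤ p and λ_a ≤ 0 for all a > p. Define the finitely supported function μ : ℤ → ℤ by μ(i) = λ_i for 1 ≤ i ≤ p, μ(i) = λ_{i+N} for p+1−N ≤ i ≤ 0, and μ(i) = 0 otherwise, and set h_i = μ(i) − μ(i+1) − N·δ_{i,0} for i ∈ ℤ. Then: (i) h_i ≥ 0 for all i ≠ 0; (ii) h_i = 0 for all but finitely many i and Σ_{i∈ℤ} h_i = −N; and (iii) whenever h_i ≠ 0 and h_j ≠ 0 one has |i − j| ≤ N. (That is, the weight Λ₋(λ) is (−N)-primitive.) -/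
/-- Let `N ≥ 1`, let `λ₁ ≥ ⋯ ≥ λ_N` be integers (written `lam : ℤ → ℤ`,
used only on `{1,…,N}`), and `p ∈ {0,…,N}` with `λ_a ≥ 0` for `a ≤ p` and
`λ_a ≤ 0` for `a > p`.  With `μ(i) = λ_i` for `1 ≤ i ≤ p`,
`μ(i) = λ_{i+N}` for `p+1-N ≤ i ≤ 0`, `μ(i) = 0` otherwise, and
`h_i = μ(i) - μ(i+1) - N·δ_{i,0}`, the weight `Λ₋(λ)` is `(-N)`-primitive:
(i) `h_i ≥ 0` for `i ≠ 0`; (ii) `h` is finitely supported and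
`Σ_i h_i = -N`; (iii) `|i - j| ≤ N` whenever `h_i ≠ 0` and `h_j ≠ 0`. -/
theorem Lambda_minus_is_primitive
    (N : ℤ) (hN : 1 ≤ N) (lam : ℤ → ℤ)
    (hdec : ∀ a b : ℤ, 1 ≤ a → a ≤ b → b ≤ N → lam b ≤ lam a)
    (p : ℤ) (hp0 : 0 ≤ p) (hpN : p ≤ N)
    (hpos : ∀ a : ℤ, 1 ≤ a → a ≤ p → 0 ≤ lam a)
    (hneg : ∀ a : ℤ, p < a → a ≤ N → lam a ≤ 0)
    (mu : ℤ → ℤ)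
    (hmu : ∀ i : ℤ, mu i =
      if 1 ≤ i ∧ i ≤ p then lam i
      else if p + 1 - N ≤ i ∧ i ≤ 0 then lam (i + N)
      else 0)
    (h : ℤ → ℤ)
    (hh : ∀ i : ℤ, h i = mu i - mu (i + 1) - if i = 0 then N else 0) :
    (∀ i : ℤ, i ≠ 0 → 0 ≤ h i) ∧
    (Function.support h).Finite ∧
    (∑ᶠ i : ℤ, h i = -N) ∧
    (∀ i j : ℤ, h i ≠ 0 → h j ≠ 0 → |i - j| ≤ N) := by
  -- μ vanishes outside (p-N, p]
  have hmu_zero : ∀ i : ℤ, (i ≤ p - N ∨ p < i) → mu i = 0 := by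
    intro i hi
    rw [hmu, if_neg (by omega), if_neg (by omega)]
  -- h vanishes outside [p-N, p]
  have hsupp : ∀ i : ℤ, i < p - N ∨ p < i → h i = 0 := by
    intro i hi
    rw [hh, hmu_zero i (by omega), hmu_zero (i + 1) (by omega),
      if_neg (by omega)]
    ring
  -- (i)
  have part1 : ∀ i : ℤ, i ≠ 0 → 0 ≤ h i := by
    intro i hi0
    rw [hh, if_neg hi0]
    by_cases hA : 1 ≤ i ∧ i ≤ p
    · have e1 : mu i = lam i := by rw [hmu, if_pos hA]
      by_cases hB : i + 1 ≤ p
      · have e2 : mu (i + 1) = lam (i + 1) := by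
          rw [hmu, if_pos ⟨by omega, hB⟩]
        have := hdec i (i + 1) hA.1 (by omega) (by omega)
        omega
      · have e2 : mu (i + 1) = 0 := by
          rw [hmu, if_neg (by omega), if_neg (by omega)]
        have := hpos i hA.1 hA.2
        omega
    · by_cases hB : p + 1 - N ≤ i ∧ i ≤ 0
      · have e1 : mu i = lam (i + N) := by rw [hmu, if_neg hA, if_pos hB]
        have e2 : mu (i + 1) = lam (i + 1 + N) := by
          rw [hmu, if_neg (by omega), if_pos ⟨by omega, by omega⟩]
        have := hdec (i + N) (i + 1 + N) (by omega) (by omega) (by omega)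
        omega
      · have e1 : mu i = 0 := by rw [hmu, if_neg hA, if_neg hB]
        by_cases hC : p + 1 - N ≤ i + 1 ∧ i + 1 ≤ 0
        · have e2 : mu (i + 1) = lam (i + 1 + N) := by
            rw [hmu, if_neg (by omega), if_pos hC]
          have := hneg (i + 1 + N) (by omega) (by omega)
          omega
        · by_cases hD : 1 ≤ i + 1 ∧ i + 1 ≤ p
          · exact absurd ⟨by omega, by omega⟩ hA
          · have e2 : mu (i + 1) = 0 := by rw [hmu, if_neg hD, if_neg hC]
            omega
  -- (ii) finiteness
  have hfin : (Function.support h).Finite := by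
    apply Set.Finite.subset (Set.finite_Icc (p - N) p)
    intro i hi
    simp only [Function.mem_support] at hi
    by_contra hc
    simp only [Set.mem_Icc, not_and_or, not_le] at hc
    exact hi (hsupp i (by omega))
  -- support finiteness of the pieces
  have hmufin : (Function.support mu).Finite := by
    apply Set.Finite.subset (Set.finite_Icc (p - N + 1) p)
    intro i hi
    simp only [Function.mem_support] at hi
    by_contra hc
    simp only [Set.mem_Icc, not_and_or, not_le] at hc
    exact hi (hmu_zero i (by omega))
  have hshiftfin : (Function.support fun i : ℤ => mu (i + 1)).Finite := by
    apply Set.Finite.subset (Set.finite_Icc (p - N) (p - 1))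
    intro i hi
    simp only [Function.mem_support] at hi
    by_contra hc
    simp only [Set.mem_Icc, not_and_or, not_le] at hc
    exact hi (hmu_zero (i + 1) (by omega))
  have hdiffin : (Function.support fun i : ℤ => mu i - mu (i + 1)).Finite := by
    apply Set.Finite.subset (hmufin.union hshiftfin)
    intro i hi
    simp only [Function.mem_support] at hi
    by_contra hc
    simp only [Set.mem_union, Function.mem_support, not_or, not_not] at hc
    omega
  have hdelfin : (Function.support fun i : ℤ => if i = 0 then N else 0).Finite := by
    apply Set.Finite.subset (Set.finite_singleton (0 : ℤ))
    intro i hi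
    simp only [Function.mem_support] at hi
    by_contra hc
    simp only [Set.mem_singleton_iff] at hc
    exact hi (if_neg hc)
  -- (ii) sum
  have hsum : ∑ᶠ i : ℤ, h i = -N := by
    rw [finsum_congr hh, finsum_sub_distrib hdiffin hdelfin,
      finsum_sub_distrib hmufin hshiftfin]
    have e1 : ∑ᶠ i : ℤ, mu (i + 1) = ∑ᶠ i : ℤ, mu i := by
      have := finsum_comp_equiv (Equiv.addRight (1 : ℤ)) (f := mu)
      simpa using this
    have e2 : ∑ᶠ i : ℤ, (if i = 0 then N else 0) = N := by
      rw [finsum_eq_single _ (0 : ℤ) (fun b hb => if_neg hb)]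
      simp
    rw [e1, e2]
    ring
  -- (iii)
  have part3 : ∀ i j : ℤ, h i ≠ 0 → h j ≠ 0 → |i - j| ≤ N := by
    intro i j hi hj
    have h1 : ¬(i < p - N ∨ p < i) := fun hc => hi (hsupp i hc)
    have h2 : ¬(j < p - N ∨ p < j) := fun hc => hj (hsupp j hc)
    rw [abs_le]
    omega
  exact ⟨part1, hfin, hsum, part3⟩
end
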